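/- arXiv:2107.01316 — 3 statements merged into one kernel-verified Lean document; each statement's English description precedes it below -/
import Mathlib

section
/- Let m, n be nonnegative integers with n ≡ 0 (mod 2^{m+2}) and n ≥ 2^{m+2} (so that n - 2^{m+1} makes sense; by convention r_m(0) = 1). Then r_m(n) = r_m(n - 2^{m+1}) + Σ_{j=0}^{⌊(m+1)/2⌋} C(m+1, 2j) · r_m((n - 2j·2^{m+1})/2). -/
/-- The integer partitioned by the binary partition `α`, where `α i` is the
number of parts equal to `2 ^ i` (so `α i` is the `α_{i+1}` of the paper). -/
def binWeight (α : ℕ →₀ ℕ) : ℕ := α.sum fun i a => a * 2 ^ i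

/-- `Pm m n` is the set of binary partitions of `n` satisfying the divisibility
conditions `2 ^ (m + 2 - i) ∣ α_i` for `1 ≤ i ≤ m + 1` (written here with the
index shifted down by one).  For `n < 0` the set is empty. -/
def Pm (m : ℕ) (n : ℤ) : Set (ℕ →₀ ℕ) :=
  {α | (binWeight α : ℤ) = n ∧ ∀ i ≤ m, 2 ^ (m + 1 - i) ∣ α i}

/-- `r m n` is the number of binary partitions of `n` satisfying the divisibility
conditions `2 ^ (m + 2 - i) ∣ α_i` for `1 ≤ i ≤ m + 1`. -/
noncomputable def r (m : ℕ) (n : ℤ) : ℕ := Nat.card (Pm m n)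

/-!
Split the partitions counted by `r m n` according to whether `α 0`, the number of parts equal
to `1`, vanishes. If `α 0 ≠ 0`, removing `2 ^ (m + 1)` ones leaves a partition counted by
`r m (n - 2 ^ (m + 1))`. If `α 0 = 0`, halving every part gives a partition `β` of `n / 2`
satisfying only the weaker conditions `2 ^ (m - i) ∣ β i` for `i ≤ m`. Let `S` be the set of
`i ≤ m` with `2 ^ (m + 1 - i) ∤ β i`; lowering `β i` by `2 ^ (m - i)` for `i ∈ S` is a bijection
onto the partitions counted by `r m (n / 2 - #S * 2 ^ m)`. Summing over `S` produces binomial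
coefficients, and the terms with `#S` odd vanish since `r m x = 0` unless `2 ^ (m + 1) ∣ x`.
-/

open Finset

lemma binWeight_eq_weight (α : ℕ →₀ ℕ) : binWeight α = Finsupp.weight (2 ^ ·) α := by
  simp [binWeight, Finsupp.weight_apply]

lemma Finsupp.finite_setOf_weight_le {σ : Type*} (w : σ → ℕ) (hw : ∀ s, w s ≠ 0) (n : ℕ)
    (hT : {s | w s ≤ n}.Finite) : {d : σ →₀ ℕ | weight w d ≤ n}.Finite := by
  refine (hT.toFinset.finsupp fun _ => range (n + 1)).finite_toSet.subset fun d hd => ?_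
  rw [Set.mem_ofPred_eq] at hd
  simp only [mem_coe, mem_finsupp_iff, Set.Finite.subset_toFinset, mem_range]
  exact ⟨fun s hs => (le_weight_of_ne_zero' w (mem_support_iff.mp hs)).trans hd,
    fun s _ => Nat.lt_succ_of_le ((le_weight w (hw s) d).trans hd)⟩

lemma finite_setOf_binWeight_le (n : ℕ) : {α : ℕ →₀ ℕ | binWeight α ≤ n}.Finite := by
  simp only [binWeight_eq_weight]
  exact Finsupp.finite_setOf_weight_le _ (fun i => by positivity) n
    ((Set.finite_Iic n).subset fun i hi => Nat.lt_two_pow_self.le.trans hi)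

lemma finite_Pm (m : ℕ) (x : ℤ) : (Pm m x).Finite :=
  (finite_setOf_binWeight_le x.toNat).subset fun α hα => by
    have := hα.1
    rw [Set.mem_ofPred_eq]
    omega

lemma r_eq_ncard (m : ℕ) (x : ℤ) : r m x = (Pm m x).ncard := rfl

lemma binWeight_add (α β : ℕ →₀ ℕ) : binWeight (α + β) = binWeight α + binWeight β := by
  simp only [binWeight_eq_weight, map_add]

lemma binWeight_single (i a : ℕ) : binWeight (Finsupp.single i a) = a * 2 ^ i := by
  simp [binWeight_eq_weight, Finsupp.weight_single]

lemma two_pow_dvd_binWeight {m : ℕ} {α : ℕ →₀ ℕ} (h : ∀ i ≤ m, 2 ^ (m + 1 - i) ∣ α i) :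
    2 ^ (m + 1) ∣ binWeight α := by
  refine Finset.dvd_sum fun i _ => ?_
  rcases le_or_gt i m with him | him
  · rw [show m + 1 = (m + 1 - i) + i by omega, pow_add]
    exact mul_dvd_mul (h i him) dvd_rfl
  · exact (pow_dvd_pow 2 him).mul_left _

lemma r_eq_zero_of_not_dvd {m : ℕ} {x : ℤ} (h : ¬ 2 ^ (m + 1) ∣ x) : r m x = 0 := by
  rw [r, Nat.card_eq_zero]
  left
  refine ⟨fun ⟨α, hw, hd⟩ => h ?_⟩
  rw [← hw]
  exact_mod_cast two_pow_dvd_binWeight hd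

lemma mem_image_add_right_iff {M : Type*} [AddCommMonoid M] [PartialOrder M]
    [CanonicallyOrderedAdd M] [Sub M] [OrderedSub M] [AddLeftReflectLE M]
    {s : Set M} {b c : M} : b ∈ (· + c) '' s ↔ c ≤ b ∧ b - c ∈ s := by
  constructor
  · rintro ⟨a, ha, rfl⟩
    exact ⟨le_add_self, by rwa [add_tsub_cancel_right]⟩
  · rintro ⟨hcb, hs⟩
    exact ⟨b - c, hs, tsub_add_cancel_of_le hcb⟩

lemma mem_image_add_right_Pm_iff {m : ℕ} {x : ℤ} {c β : ℕ →₀ ℕ} (hc : ∀ i, m < i → c i = 0) :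
    β ∈ (· + c) '' Pm m x ↔ (binWeight β : ℤ) = x + binWeight c ∧
      ∀ i ≤ m, c i ≤ β i ∧ 2 ^ (m + 1 - i) ∣ β i - c i := by
  rw [mem_image_add_right_iff]
  constructor
  · rintro ⟨hcβ, hw, hd⟩
    refine ⟨?_, fun i hi => ⟨hcβ i, hd i hi⟩⟩
    rw [← tsub_add_cancel_of_le hcβ, binWeight_add]
    push_cast
    linarith
  · rintro ⟨hw, hd⟩
    have hcβ : c ≤ β := fun i => by
      rcases le_or_gt i m with hi | hi
      · exact (hd i hi).1
      · simp [hc i hi]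
    refine ⟨hcβ, ?_, fun i hi => (hd i hi).2⟩
    have := binWeight_add (β - c) c
    rw [tsub_add_cancel_of_le hcβ] at this
    simp only [this, Nat.cast_add] at hw
    linarith

lemma Nat.le_and_dvd_sub_self_iff {b c : ℕ} (hc : 0 < c) :
    c ≤ b ∧ c ∣ b - c ↔ b ≠ 0 ∧ c ∣ b := by
  rw [Nat.dvd_sub_self_right]
  constructor
  · rintro ⟨hcb, h | h⟩
    · exact ⟨by omega, h⟩
    · exact ⟨by omega, by rw [le_antisymm h hcb]⟩
  · rintro ⟨hb, h⟩
    exact ⟨Nat.le_of_dvd (Nat.pos_of_ne_zero hb) h, Or.inl h⟩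

lemma Nat.le_and_two_mul_dvd_sub_iff {b d : ℕ} (hd : 0 < d) :
    d ≤ b ∧ 2 * d ∣ b - d ↔ d ∣ b ∧ ¬ 2 * d ∣ b := by
  rw [mul_comm 2 d]
  constructor
  · rintro ⟨hdb, k, hk⟩
    have hb : b = d * (2 * k + 1) := by rw [mul_add, ← mul_assoc, ← hk]; omega
    refine ⟨⟨_, hb⟩, fun h => ?_⟩
    rw [hb, mul_dvd_mul_iff_left hd.ne'] at h
    omega
  · rintro ⟨⟨k, rfl⟩, hnd⟩
    rw [mul_dvd_mul_iff_left hd.ne'] at hnd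
    obtain ⟨l, rfl⟩ : ∃ l, k = 2 * l + 1 := ⟨k / 2, by omega⟩
    refine ⟨Nat.le_mul_of_pos_right d (by omega), l, ?_⟩
    rw [mul_add, mul_one, Nat.add_sub_cancel]
    ring

lemma image_add_single_zero_Pm (m : ℕ) (x : ℤ) :
    (· + Finsupp.single 0 (2 ^ (m + 1))) '' Pm m x = {α ∈ Pm m (x + 2 ^ (m + 1)) | α 0 ≠ 0} := by
  ext β
  rw [mem_image_add_right_Pm_iff fun i hi => Finsupp.single_eq_of_ne (by omega), binWeight_single]
  simp only [Pm, Set.mem_ofPred_eq, pow_zero, mul_one, and_assoc]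
  have h0_iff := Nat.le_and_dvd_sub_self_iff (b := β 0) (c := 2 ^ (m + 1)) (by positivity)
  refine and_congr_right fun _ => ⟨fun h => ⟨fun i hi => ?_, ?_⟩, fun ⟨h, h0⟩ i hi => ?_⟩
  · rcases Nat.eq_zero_or_pos i with rfl | hi0
    · simpa using (h0_iff.mp (by simpa using h 0 hi)).2
    · simpa [Finsupp.single_eq_of_ne (show i ≠ 0 by omega)] using (h i hi).2
  · exact (h0_iff.mp (by simpa using h 0 (Nat.zero_le m))).1
  · rcases Nat.eq_zero_or_pos i with rfl | hi0
    · simpa using h0_iff.mpr ⟨h0, by simpa using h 0 hi⟩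
    · simpa [Finsupp.single_eq_of_ne (show i ≠ 0 by omega)] using h i hi

def relaxedPm (m N : ℕ) : Set (ℕ →₀ ℕ) := {β | binWeight β = N ∧ ∀ i ≤ m, 2 ^ (m - i) ∣ β i}

lemma finite_relaxedPm (m N : ℕ) : (relaxedPm m N).Finite :=
  (finite_setOf_binWeight_le N).subset fun _ hβ => hβ.1.le

lemma binWeight_embDomain_succ (β : ℕ →₀ ℕ) :
    binWeight (β.embDomain (addRightEmbedding 1)) = 2 * binWeight β := by
  rw [binWeight, Finsupp.sum_embDomain, binWeight, Finsupp.sum, Finsupp.sum, Finset.mul_sum]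
  exact Finset.sum_congr rfl fun i _ => by simp [pow_succ]; ring

lemma image_embDomain_succ_relaxedPm (m N : ℕ) :
    Finsupp.embDomain (addRightEmbedding 1) '' relaxedPm m N = {α ∈ Pm m (2 * N) | α 0 = 0} := by
  have h0 : (0 : ℕ) ∉ Set.range (addRightEmbedding 1) := by simp
  ext α
  constructor
  · rintro ⟨β, ⟨hw, hd⟩, rfl⟩
    refine ⟨⟨by rw [binWeight_embDomain_succ, hw]; push_cast; ring, fun i hi => ?_⟩,
      Finsupp.embDomain_of_notMem_range _ _ _ h0⟩
    cases i with
    | zero => simp [Finsupp.embDomain_of_notMem_range _ _ _ h0]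
    | succ k =>
      rw [show k + 1 = addRightEmbedding 1 k from rfl, Finsupp.embDomain_apply_self]
      simpa [show m + 1 - (k + 1) = m - k by omega] using hd k (by omega)
  · rintro ⟨⟨hw, hd⟩, hα0⟩
    have hα : ↑α.support ⊆ Set.range (addRightEmbedding 1) := fun i hi => by
      obtain ⟨k, rfl⟩ := Nat.exists_eq_succ_of_ne_zero (show i ≠ 0 by rintro rfl; simp_all)
      exact ⟨k, rfl⟩
    refine ⟨α.comapDomain _ (addRightEmbedding 1).injective.injOn, ⟨?_, fun k hk => ?_⟩,
      Finsupp.embDomain_comapDomain hα⟩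
    · have := binWeight_embDomain_succ (α.comapDomain _ (addRightEmbedding 1).injective.injOn)
      rw [Finsupp.embDomain_comapDomain hα] at this
      omega
    · rcases hk.lt_or_eq with hk | rfl
      · simpa [show m + 1 - (k + 1) = m - k by omega] using hd (k + 1) hk
      · simp

def defectSet (m : ℕ) (β : ℕ →₀ ℕ) : Finset ℕ :=
  {i ∈ Finset.range (m + 1) | ¬ 2 ^ (m + 1 - i) ∣ β i}

lemma defectSet_subset (m : ℕ) (β : ℕ →₀ ℕ) : defectSet m β ⊆ Finset.range (m + 1) :=
  Finset.filter_subset _ _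

noncomputable def offset (m : ℕ) (S : Finset ℕ) : ℕ →₀ ℕ :=
  ∑ i ∈ S, Finsupp.single i (2 ^ (m - i))

lemma offset_apply (m : ℕ) (S : Finset ℕ) (i : ℕ) :
    offset m S i = if i ∈ S then 2 ^ (m - i) else 0 := by
  simp [offset, Finsupp.finsetSum_apply, Finsupp.single_apply]

lemma binWeight_offset {m : ℕ} {S : Finset ℕ} (hS : S ⊆ Finset.range (m + 1)) :
    binWeight (offset m S) = S.card * 2 ^ m := by
  rw [offset, binWeight_eq_weight, map_sum, Finset.card_eq_sum_ones, Finset.sum_mul]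
  refine Finset.sum_congr rfl fun i hi => ?_
  have := Finset.mem_range.mp (hS hi)
  rw [Finsupp.weight_single, smul_eq_mul, ← pow_add, one_mul, Nat.sub_add_cancel (by omega)]

lemma defectSet_eq_iff {m : ℕ} {β : ℕ →₀ ℕ} {S : Finset ℕ} (hS : S ⊆ Finset.range (m + 1)) :
    defectSet m β = S ↔ ∀ i ≤ m, (¬ 2 ^ (m + 1 - i) ∣ β i ↔ i ∈ S) := by
  simp only [Finset.ext_iff, defectSet, Finset.mem_filter, Finset.mem_range]
  refine ⟨fun h i hi => by rw [← h]; omega, fun h i => ?_⟩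
  rcases le_or_gt i m with hi | hi
  · rw [← h i hi]; omega
  · have : i ∉ S := fun hiS => by have := Finset.mem_range.mp (hS hiS); omega
    simp only [this, iff_false]; omega

lemma image_add_offset_Pm {m : ℕ} (N : ℕ) {S : Finset ℕ} (hS : S ⊆ Finset.range (m + 1)) :
    (· + offset m S) '' Pm m (N - S.card * 2 ^ m) = {β ∈ relaxedPm m N | defectSet m β = S} := by
  have hoff : ∀ i, m < i → offset m S i = 0 := fun i hi => by
    rw [offset_apply, if_neg fun hiS => by have := Finset.mem_range.mp (hS hiS); omega]
  ext β
  rw [mem_image_add_right_Pm_iff hoff, binWeight_offset hS]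
  simp only [relaxedPm, Set.mem_ofPred_eq, defectSet_eq_iff hS, and_assoc, ← forall₂_and]
  refine and_congr (by push_cast; omega) (forall₂_congr fun i hi => ?_)
  have hpow : 2 ^ (m + 1 - i) = 2 * 2 ^ (m - i) := by rw [← pow_succ']; congr 1; omega
  rw [offset_apply, hpow]
  split_ifs with hiS
  · rw [Nat.le_and_two_mul_dvd_sub_iff (by positivity)]
    simp [hiS]
  · simpa [hiS] using fun h => (Dvd.intro_left _ rfl).trans h

lemma ncard_relaxedPm (m N : ℕ) :
    (relaxedPm m N).ncard = ∑ k ∈ range (m + 2), (m + 1).choose k * r m (N - k * 2 ^ m) := by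
  classical
  have hfin := finite_relaxedPm m N
  have hfiber : ∀ S ∈ (Finset.range (m + 1)).powerset,
      #{β ∈ hfin.toFinset | defectSet m β = S} = r m (N - S.card * 2 ^ m) := fun S hS => by
    rw [r_eq_ncard, ← Set.ncard_image_of_injective _ (add_left_injective (offset m S)),
      image_add_offset_Pm N (Finset.mem_powerset.mp hS), ← Set.ncard_coe_finset]
    congr 1
    ext β
    simp
  rw [Set.ncard_eq_toFinset_card _ hfin,
    Finset.card_eq_sum_card_fiberwise fun β _ => Finset.mem_powerset.mpr (defectSet_subset m β),
    Finset.sum_congr rfl hfiber,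
    Finset.sum_powerset_apply_card (fun k : ℕ => r m (N - k * 2 ^ m)), Finset.card_range]
  simp

lemma r_two_mul (m N : ℕ) : r m (2 * N) = r m (2 * N - 2 ^ (m + 1)) + (relaxedPm m N).ncard := by
  rw [r_eq_ncard, ← Set.ncard_inter_add_ncard_sdiff_eq_ncard _ {α | α 0 = 0} (finite_Pm _ _),
    add_comm]
  congr 1
  · rw [r_eq_ncard, ← Set.ncard_image_of_injective (Pm m _)
      (add_left_injective (Finsupp.single 0 (2 ^ (m + 1)))), image_add_single_zero_Pm,
      sub_add_cancel]
    rfl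
  · rw [← Set.ncard_image_of_injective (relaxedPm m N) (Finsupp.embDomain_injective _),
      image_embDomain_succ_relaxedPm]
    rfl

lemma r_sub_odd_mul_two_pow_eq_zero {m N k : ℕ} (hN : 2 ^ (m + 1) ∣ N) (hk : Odd k) :
    r m (N - k * 2 ^ m) = 0 := by
  refine r_eq_zero_of_not_dvd fun h => ?_
  have : (2 : ℤ) * 2 ^ m ∣ k * 2 ^ m := by
    rw [← pow_succ']
    simpa using dvd_sub (Int.natCast_dvd_natCast.mpr hN) h
  rw [mul_dvd_mul_iff_right (by positivity)] at this
  exact (Int.not_even_iff_odd.mpr (by exact_mod_cast hk)) (even_iff_two_dvd.mpr this)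

lemma Finset.sum_range_succ_eq_sum_range_even {M : Type*} [AddCommMonoid M] {f : ℕ → M}
    (hf : ∀ k, Odd k → f k = 0) (n : ℕ) :
    ∑ k ∈ range (n + 1), f k = ∑ j ∈ range (n / 2 + 1), f (2 * j) := by
  have heven : {k ∈ range (n + 1) | Even k} = (range (n / 2 + 1)).image (2 * ·) := by
    ext k
    simp only [mem_filter, mem_range, mem_image, Nat.even_iff]
    exact ⟨fun ⟨hk, he⟩ => ⟨k / 2, by omega, by omega⟩, by rintro ⟨j, hj, rfl⟩; omega⟩
  rw [← sum_filter_of_ne (p := Even) fun k _ h => Nat.not_odd_iff_even.mp (mt (hf k) h), heven,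
    sum_image fun a _ b _ h => by simpa using h]

theorem stmt1_general (m n : ℕ) (hmod : n % 2 ^ (m + 2) = 0) :
    r m n = r m ((n : ℤ) - 2 ^ (m + 1)) +
      ∑ j ∈ Finset.range ((m + 1) / 2 + 1),
        (m + 1).choose (2 * j) *
          r m (((n : ℤ) - 2 * j * 2 ^ (m + 1)) / 2) := by
  obtain ⟨t, rfl⟩ := Nat.dvd_of_mod_eq_zero hmod
  have hN : 2 ^ (m + 1) ∣ 2 ^ (m + 1) * t := dvd_mul_right _ _
  have hn : ((2 ^ (m + 2) * t : ℕ) : ℤ) = 2 * (2 ^ (m + 1) * t : ℕ) := by push_cast; ring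
  rw [hn, r_two_mul, ncard_relaxedPm, Finset.sum_range_succ_eq_sum_range_even
    (fun k hk => by rw [r_sub_odd_mul_two_pow_eq_zero hN hk, mul_zero])]
  refine congrArg _ (Finset.sum_congr rfl fun j _ => ?_)
  congr 2
  rw [show (2 * (2 ^ (m + 1) * t : ℕ) - 2 * j * 2 ^ (m + 1) : ℤ)
      = 2 * ((2 ^ (m + 1) * t : ℕ) - ((2 * j : ℕ) : ℤ) * 2 ^ m) by push_cast; ring,
    Int.mul_ediv_cancel_left _ two_ne_zero]

theorem stmt1 (m n : ℕ) (hge : 2 ^ (m + 2) ≤ n) (hmod : n % 2 ^ (m + 2) = 0) :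
    r m n = r m ((n : ℤ) - 2 ^ (m + 1)) +
      ∑ j ∈ Finset.range ((m + 1) / 2 + 1),
        (m + 1).choose (2 * j) *
          r m (((n : ℤ) - 2 * j * 2 ^ (m + 1)) / 2) :=
  stmt1_general m n hmod
end

section
/- Let n be a nonnegative integer with n ≡ 0 (mod 2). Then r_0(n) = Σ_{k=0}^{n/2} b(k), where b(k) is the number of binary partitions of k (with no divisibility conditions). -/
/-- `b n` is the number of binary partitions of `n` (no divisibility conditions). -/
noncomputable def b (n : ℕ) : ℕ := Nat.card {α : ℕ →₀ ℕ | binWeight α = n}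

/-! Deleting the parts equal to 1 from a binary partition of `n` and halving the other parts
gives a binary partition of some `k ≤ n / 2`, from which the original one is recovered by adding
`n - 2k` ones. Hence `b n = ∑ k ≤ n / 2, b k` for every `n`. For even `n` the number `n - 2k` of
ones is automatically even, so `r 0 n = b n`. -/

namespace Finsupp

variable {M : Type*} [AddZeroClass M]

noncomputable def natTail (f : ℕ →₀ M) : ℕ →₀ M :=
  f.comapDomain Nat.succ Nat.succ_injective.injOn

noncomputable def natCons (a : M) (f : ℕ →₀ M) : ℕ →₀ M :=
  single 0 a + f.embDomain ⟨Nat.succ, Nat.succ_injective⟩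

@[simp]
lemma natTail_apply (f : ℕ →₀ M) (i : ℕ) : natTail f i = f (i + 1) := rfl

@[simp]
lemma natCons_zero (a : M) (f : ℕ →₀ M) : natCons a f 0 = a := by
  simp [natCons, embDomain_of_notMem_range]

@[simp]
lemma natCons_succ (a : M) (f : ℕ →₀ M) (i : ℕ) : natCons a f (i + 1) = f i := by
  simpa [natCons] using embDomain_apply_self ⟨Nat.succ, Nat.succ_injective⟩ f i

@[simp]
lemma natTail_natCons (a : M) (f : ℕ →₀ M) : natTail (natCons a f) = f := by
  ext; simp

lemma natCons_apply_zero_natTail (f : ℕ →₀ M) : natCons (f 0) (natTail f) = f := by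
  ext (_ | i) <;> simp

end Finsupp

open Finsupp

lemma binWeight_natCons (a : ℕ) (β : ℕ →₀ ℕ) :
    binWeight (natCons a β) = a + 2 * binWeight β := by
  rw [binWeight, natCons, sum_add_index' (by simp) (by intros; ring), sum_single_index (by simp),
    sum_embDomain, binWeight, mul_sum]
  simp only [Function.Embedding.coeFn_mk, pow_succ, pow_zero, mul_one]
  exact congrArg _ (sum_congr fun _ _ => by ring)

lemma binWeight_eq_apply_zero_add (α : ℕ →₀ ℕ) : binWeight α = α 0 + 2 * binWeight (natTail α) := by
  conv_lhs => rw [← natCons_apply_zero_natTail α]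
  exact binWeight_natCons _ _

lemma apply_mul_two_pow_le_binWeight (α : ℕ →₀ ℕ) (i : ℕ) : α i * 2 ^ i ≤ binWeight α := by
  by_cases hi : i ∈ α.support
  · exact Finset.single_le_sum (f := fun i => α i * 2 ^ i) (fun _ _ => Nat.zero_le _) hi
  · simp [notMem_support_iff.mp hi]

lemma finite_setOf_binWeight_eq (n : ℕ) : {α : ℕ →₀ ℕ | binWeight α = n}.Finite := by
  refine ((Finset.range (n + 1)).finsupp fun _ => Finset.range (n + 1)).finite_toSet.subset ?_
  rintro α rfl
  have hle := apply_mul_two_pow_le_binWeight α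
  rw [Finset.mem_coe, Finset.mem_finsupp_iff]
  refine ⟨fun i hi => Finset.mem_range_succ_iff.mpr ?_, fun i _ => Finset.mem_range_succ_iff.mpr
    ((Nat.le_mul_of_pos_right _ (by positivity)).trans (hle i))⟩
  calc i ≤ 2 ^ i := Nat.lt_two_pow_self.le
    _ ≤ α i * 2 ^ i := Nat.le_mul_of_pos_left _ (Nat.pos_of_ne_zero (mem_support_iff.mp hi))
    _ ≤ binWeight α := hle i

instance (n : ℕ) : Finite {α : ℕ →₀ ℕ | binWeight α = n} := (finite_setOf_binWeight_eq n).to_subtype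

noncomputable def binWeightEqEquivSigma (n : ℕ) :
    {α : ℕ →₀ ℕ | binWeight α = n} ≃ Σ k : Fin (n / 2 + 1), {β : ℕ →₀ ℕ | binWeight β = k} where
  toFun α := ⟨⟨binWeight (natTail α), by
    have := binWeight_eq_apply_zero_add α
    have hα : binWeight α = n := α.2
    omega⟩, ⟨natTail α, rfl⟩⟩
  invFun p := ⟨natCons (n - 2 * p.1) p.2, by
    have := p.1.2; have := p.2.2; simp only [Set.mem_ofPred_eq, binWeight_natCons] at *; omega⟩
  left_inv α := by
    have := binWeight_eq_apply_zero_add α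
    have hα : binWeight α = n := α.2
    ext1
    simp only [show n - 2 * binWeight (natTail α) = α.1 0 by omega, natCons_apply_zero_natTail]
  right_inv := by
    rintro ⟨k, β, hβ⟩
    exact Sigma.subtype_ext (Fin.ext (by simpa using hβ)) (natTail_natCons _ _)

theorem b_eq_sum_range (n : ℕ) : b n = ∑ k ∈ Finset.range (n / 2 + 1), b k := by
  rw [b, Nat.card_congr (binWeightEqEquivSigma n), Nat.card_sigma,
    ← Fin.sum_univ_eq_sum_range (fun k => b k)]
  rfl

lemma Pm_zero_natCast_of_two_dvd {n : ℕ} (hn : 2 ∣ n) : Pm 0 n = {α | binWeight α = n} := by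
  ext α
  simp only [Pm, Set.mem_ofPred_eq, Nat.le_zero, forall_eq, Nat.cast_inj]
  have := binWeight_eq_apply_zero_add α
  omega

lemma r_zero_natCast_of_two_dvd {n : ℕ} (hn : 2 ∣ n) : r 0 n = b n := by
  rw [r, Pm_zero_natCast_of_two_dvd hn, b]

theorem stmt4 (n : ℕ) (hn : 2 ∣ n) :
    r 0 n = ∑ k ∈ Finset.range (n / 2 + 1), b k := by
  rw [r_zero_natCast_of_two_dvd hn, b_eq_sum_range]
end

section
/- Let m ≥ 0 and n ≥ 0. The map τ_1 sending (α_1, α_2, α_3, …) to (α_1 − 2^{m+1}, α_2, α_3, …) is a bijection from P_{m,1}(n), the set of partitions in P_m(n) with α_1 > 0, onto P_m(n − 2^{m+1}). In particular, if α_1 > 0 for some partition in P_m(n), then α_1 ≥ 2^{m+1}, and |P_{m,1}(n)| = r_m(n − 2^{m+1}). -/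
/-- `Pm1 m n` is the set of partitions in `Pm m n` whose first entry `α₁`
(here `α 0`) is positive. -/
def Pm1 (m : ℕ) (n : ℤ) : Set (ℕ →₀ ℕ) := {α ∈ Pm m n | 0 < α 0}

lemma binWeight_update (α : ℕ →₀ ℕ) (v : ℕ) :
    binWeight (α.update 0 v) + α 0 = binWeight α + v := by
  have h0 : ∀ i : ℕ, (0 : ℕ) * 2 ^ i = 0 := fun i => zero_mul _
  have hadd : ∀ (i : ℕ) (a b : ℕ), (a + b) * 2 ^ i = a * 2 ^ i + b * 2 ^ i :=
    fun i a b => add_mul a b _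
  have h1 : binWeight (α.update 0 v) = binWeight (α.erase 0) + v := by
    rw [binWeight, Finsupp.update_eq_erase_add_single,
      Finsupp.sum_add_index' h0 hadd, Finsupp.sum_single_index (h0 0)]
    simp [binWeight]
  have h2 : binWeight (α.erase 0) + α 0 = binWeight α := by
    rw [binWeight, binWeight, ← Finsupp.add_sum_erase' α 0 _ h0]
    ring_nf
  omega

/-- Lemma (τ₁): subtracting `2^(m+1)` from the first entry is a bijection from
`P_{m,1}(n)` onto `P_m(n - 2^(m+1))`.  In particular any partition in `P_m(n)`
with positive first entry has first entry at least `2^(m+1)`, and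
`|P_{m,1}(n)| = r_m(n - 2^(m+1))`. -/
theorem stmt8 (m n : ℕ) :
    Set.BijOn (fun α : ℕ →₀ ℕ => α.update 0 (α 0 - 2 ^ (m + 1)))
      (Pm1 m n) (Pm m ((n : ℤ) - 2 ^ (m + 1))) ∧
    (∀ α ∈ Pm m (n : ℤ), 0 < α 0 → 2 ^ (m + 1) ≤ α 0) ∧
    Nat.card (Pm1 m n) = r m ((n : ℤ) - 2 ^ (m + 1)) := by
  have hge : ∀ α ∈ Pm m (n : ℤ), 0 < α 0 → 2 ^ (m + 1) ≤ α 0 := by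
    intro α hα hpos
    have hd := hα.2 0 (Nat.zero_le m)
    simpa using Nat.le_of_dvd hpos (by simpa using hd)
  have hbij : Set.BijOn (fun α : ℕ →₀ ℕ => α.update 0 (α 0 - 2 ^ (m + 1)))
      (Pm1 m n) (Pm m ((n : ℤ) - 2 ^ (m + 1))) := by
    refine ⟨?_, ?_, ?_⟩
    · intro α hα
      obtain ⟨hαP, hpos⟩ := hα
      have hle := hge α hαP hpos
      have hw := binWeight_update α (α 0 - 2 ^ (m + 1))
      constructor
      · have : binWeight (α.update 0 (α 0 - 2 ^ (m + 1))) + 2 ^ (m + 1) = binWeight α := by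
          omega
        have hc : (binWeight α : ℤ) = n := hαP.1
        push_cast [← this] at hc ⊢
        linarith
      · intro i hi
        rcases eq_or_ne i 0 with rfl | hne
        · have hd : (2 : ℕ) ^ (m + 1) ∣ α 0 := by simpa using hαP.2 0 (Nat.zero_le m)
          simpa using Nat.dvd_sub hd dvd_rfl
        · simpa [Finsupp.coe_update, Function.update_apply, hne] using hαP.2 i hi
    · intro α hα β hβ h
      have hleα := hge α hα.1 hα.2
      have hleβ := hge β hβ.1 hβ.2
      ext i
      rcases eq_or_ne i 0 with rfl | hne
      · have := congrArg (fun f : ℕ →₀ ℕ => f 0) h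
        simp only [Finsupp.coe_update, Function.update_self] at this
        omega
      · have := congrArg (fun f : ℕ →₀ ℕ => f i) h
        simpa [Finsupp.coe_update, Function.update_apply, hne] using this
    · intro β hβ
      refine ⟨β.update 0 (β 0 + 2 ^ (m + 1)), ?_, ?_⟩
      · have hw := binWeight_update β (β 0 + 2 ^ (m + 1))
        refine ⟨⟨?_, ?_⟩, ?_⟩
        · have hc : (binWeight β : ℤ) = (n : ℤ) - 2 ^ (m + 1) := hβ.1
          have : binWeight (β.update 0 (β 0 + 2 ^ (m + 1))) = binWeight β + 2 ^ (m + 1) := by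
            omega
          rw [this]
          push_cast
          linarith
        · intro i hi
          rcases eq_or_ne i 0 with rfl | hne
          · have hd : (2 : ℕ) ^ (m + 1) ∣ β 0 := by simpa using hβ.2 0 (Nat.zero_le m)
            simpa using dvd_add hd dvd_rfl
          · simpa [Finsupp.coe_update, Function.update_apply, hne] using hβ.2 i hi
        · simp only [Finsupp.coe_update, Function.update_self]
          positivity
      · simp only [Finsupp.coe_update, Function.update_self, Nat.add_sub_cancel]
        ext i
        rcases eq_or_ne i 0 with rfl | hne
        · simp [Finsupp.coe_update, Function.update_apply]
        · simp [Finsupp.coe_update, Function.update_apply, hne]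
  exact ⟨hbij, hge, Nat.card_congr hbij.equiv⟩
end
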